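/- arXiv:2503.12397 — 5 statements merged into one kernel-verified Lean document; each statement's English description precedes it below -/
import Mathlib

section
/- For all integers n, m with 0 < m < n, the scaling functions satisfy the interpolation property Φ_{n,k}^m(x_h^n) = δ_{h,k} for all h, k = 1,…,n, i.e. Φ_{n,k}^m equals 1 at x_k^n and 0 at every other Chebyshev node x_h^n. -/
open Real MeasureTheory Finset

/-- Chebyshev nodes of the first kind: `x_k^n = cos((2k-1)π/(2n))`. -/
noncomputable def chebNode (n k : ℕ) : ℝ :=
  Real.cos ((2 * (k : ℝ) - 1) * Real.pi / (2 * (n : ℝ)))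

/-- Orthonormal Chebyshev polynomials of the first kind. -/
noncomputable def chebP (r : ℕ) (x : ℝ) : ℝ :=
  if r = 0 then Real.sqrt (1 / Real.pi)
  else Real.sqrt (2 / Real.pi) * Real.cos ((r : ℝ) * Real.arccos x)

/-- Darboux kernel `K_r(x,y) = Σ_{s=0}^r p_s(x) p_s(y)`. -/
noncomputable def darboux (r : ℕ) (x y : ℝ) : ℝ :=
  ∑ s ∈ Finset.range (r + 1), chebP s x * chebP s y

/-- de la Vallée Poussin kernel `v_n^m(x,y) = (1/(2m)) Σ_{r=n-m}^{n+m-1} K_r(x,y)`. -/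
noncomputable def vpK (n m : ℕ) (x y : ℝ) : ℝ :=
  (1 / (2 * (m : ℝ))) * ∑ r ∈ Finset.Icc (n - m) (n + m - 1), darboux r x y

/-- The Chebyshev weight `w(x) = 1/√(1-x²)`. -/
noncomputable def chebW (x : ℝ) : ℝ := 1 / Real.sqrt (1 - x ^ 2)

/-- Scaling functions `Φ_{n,k}^m(x) = (π/n) v_n^m(x_k^n, x)`. -/
noncomputable def scal (n m k : ℕ) (x : ℝ) : ℝ :=
  (Real.pi / (n : ℝ)) * vpK n m (chebNode n k) x

/-- The nodes `y_k^n`, `k = 1,…,2n`: the Chebyshev nodes of order `3n` not of order `n`. -/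
noncomputable def yNode (n k : ℕ) : ℝ := chebNode (3 * n) (3 * k / 2)

/-- Wavelet functions `ψ_{n,k}^m`. -/
noncomputable def wav (n m k : ℕ) (x : ℝ) : ℝ :=
  (Real.pi / (3 * (n : ℝ))) * vpK (3 * n) m (yNode n k) x -
    ∑ h ∈ Finset.Icc 1 n,
      scal n m h (yNode n k) * ((Real.pi / (3 * (n : ℝ))) * vpK (3 * n) m (chebNode n h) x)

/-- Filter coefficients `μ_{n,r}^m`. -/
noncomputable def muC (n m r : ℕ) : ℝ :=
  if r ≤ n - m then 1
  else if r < n + m then ((m : ℝ) + (n : ℝ) - (r : ℝ)) / (2 * (m : ℝ))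
  else 0

/-- Squared norms `ν_{n,r}^m` of the orthogonal scaling basis. -/
noncomputable def nuC (n m r : ℕ) : ℝ :=
  if r ≤ n - m then 1 else ((m : ℝ) ^ 2 + ((n : ℝ) - (r : ℝ)) ^ 2) / (2 * (m : ℝ) ^ 2)

/-- Orthogonal scaling basis `Φ_{n,r}^⊥`. -/
noncomputable def scalPerp (n m r : ℕ) (x : ℝ) : ℝ :=
  if r ≤ n - m then chebP r x
  else muC n m r * chebP r x - muC n m (2 * n - r) * chebP (2 * n - r) x

/-- The sup norm on `[-1,1]`. -/
noncomputable def supNorm (f : ℝ → ℝ) : ℝ := ⨆ x : Set.Icc (-1 : ℝ) 1, |f x|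

/-- The Lebesgue constant `c_∞ = max_{|x|≤1} ∫_{-1}^1 |v_n^m(x,y)| w(y) dy`. -/
noncomputable def cInf (n m : ℕ) : ℝ :=
  ⨆ x : Set.Icc (-1 : ℝ) 1, ∫ y in (-1 : ℝ)..1, |vpK n m x y| * chebW y


lemma sinNe (n : ℕ) (a : ℤ) (hn : 0 < n) (ha : ¬ (2*(n:ℤ)) ∣ a) :
    Real.sin ((a:ℝ) * π / (2*(n:ℝ))) ≠ 0 := by
  intro h
  rw [Real.sin_eq_zero_iff] at h
  obtain ⟨j, hj⟩ := h
  apply ha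
  refine ⟨j, ?_⟩
  have hn' : (n:ℝ) ≠ 0 := Nat.cast_ne_zero.2 hn.ne'
  have hπ : π ≠ 0 := Real.pi_ne_zero
  field_simp at hj
  have h2 : ((2*(n:ℤ)*j : ℤ):ℝ) * π = (a:ℝ) * π := by push_cast; rw [← hj]; ring
  have := mul_right_cancel₀ hπ h2
  exact_mod_cast this.symm

lemma cosSum (n : ℕ) (hn : 0 < n) (a : ℤ) (ha : ¬ (2*(n:ℤ)) ∣ a) :
    ∑ s ∈ Finset.range n, Real.cos ((s:ℝ) * ((a:ℝ) * π / (n:ℝ)))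
      = if Even a then 0 else 1 := by
  have hn' : (n:ℝ) ≠ 0 := Nat.cast_ne_zero.2 hn.ne'
  set φ : ℝ := (a:ℝ)*π/(n:ℝ) with hφ
  have hs : Real.sin (φ/2) ≠ 0 := by
    have h2 : φ/2 = (a:ℝ)*π/(2*(n:ℝ)) := by rw [hφ]; ring
    rw [h2]; exact sinNe n a hn ha
  have tele := Finset.sum_range_sub (fun s : ℕ => Real.sin (((s:ℝ)-1/2)*φ)) n
  have step : ∀ s : ℕ, Real.sin ((((s+1:ℕ):ℝ)-1/2)*φ) - Real.sin (((s:ℝ)-1/2)*φ)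
      = 2 * Real.sin (φ/2) * Real.cos ((s:ℝ)*φ) := by
    intro s
    rw [Real.sin_sub_sin]
    push_cast
    ring_nf
  simp only [step] at tele
  rw [← Finset.mul_sum] at tele
  have hend : Real.sin (((n:ℝ)-1/2)*φ) = -(Real.cos ((a:ℝ)*π)) * Real.sin (φ/2) := by
    have he : ((n:ℝ)-1/2)*φ = (a:ℝ)*π - φ/2 := by rw [hφ]; field_simp
    rw [he, Real.sin_sub, Real.sin_int_mul_pi]
    ring
  have hstart : Real.sin ((((0:ℕ):ℝ)-1/2)*φ) = -Real.sin (φ/2) := by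
    rw [show (((0:ℕ):ℝ)-1/2)*φ = -(φ/2) by push_cast; ring, Real.sin_neg]
  rw [hend, hstart] at tele
  have hca : Real.cos ((a:ℝ)*π) = if Even a then 1 else -1 := by
    rcases Int.even_or_odd a with he | ho
    · obtain ⟨b, hb⟩ := he
      rw [if_pos ⟨b, hb⟩]
      rw [show (a:ℝ)*π = (b:ℝ)*(2*π) by rw [hb]; push_cast; ring]
      exact Real.cos_int_mul_two_pi b
    · obtain ⟨b, hb⟩ := ho
      rw [if_neg (Int.not_even_iff_odd.mpr ⟨b, hb⟩)]
      rw [show (a:ℝ)*π = (b:ℝ)*(2*π) + π by rw [hb]; push_cast; ring]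
      rw [Real.cos_add_pi, Real.cos_int_mul_two_pi b]
  rw [hca] at tele
  have h2 : (2:ℝ) * Real.sin (φ/2) ≠ 0 := mul_ne_zero two_ne_zero hs
  rcases em (Even a) with he | he
  · rw [if_pos he] at tele ⊢
    have : (2 * Real.sin (φ/2)) * ∑ s ∈ Finset.range n, Real.cos ((s:ℝ)*φ)
        = (2 * Real.sin (φ/2)) * 0 := by rw [mul_zero]; linarith
    exact mul_left_cancel₀ h2 this
  · rw [if_neg he] at tele ⊢
    have : (2 * Real.sin (φ/2)) * ∑ s ∈ Finset.range n, Real.cos ((s:ℝ)*φ)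
        = (2 * Real.sin (φ/2)) * 1 := by rw [mul_one]; linarith
    exact mul_left_cancel₀ h2 this


theorem scal_interpolation (n m : ℕ) (hm : 0 < m) (hmn : m < n)
    (h k : ℕ) (hh : h ∈ Finset.Icc 1 n) (hk : k ∈ Finset.Icc 1 n) :
    scal n m k (chebNode n h) = if h = k then 1 else 0 := by
  simp only [Finset.mem_Icc] at hh hk
  obtain ⟨hh1, hh2⟩ := hh
  obtain ⟨hk1, hk2⟩ := hk
  have hn : 0 < n := hm.trans hmn
  have hn' : (n:ℝ) ≠ 0 := Nat.cast_ne_zero.2 hn.ne'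
  have hπ : (0:ℝ) < π := Real.pi_pos
  set θ : ℕ → ℝ := fun j => (2*(j:ℝ)-1)*π/(2*(n:ℝ)) with hθ
  have harc : ∀ j, 1 ≤ j → j ≤ n → Real.arccos (chebNode n j) = θ j := by
    intro j h1 h2
    have hj1 : (1:ℝ) ≤ (j:ℝ) := by exact_mod_cast h1
    have hj2 : (j:ℝ) ≤ (n:ℝ) := by exact_mod_cast h2
    have hnpos : (0:ℝ) < (n:ℝ) := by positivity
    unfold chebNode
    apply Real.arccos_cos
    · apply div_nonneg _ (by positivity)
      nlinarith
    · rw [div_le_iff₀ (by positivity)]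
      nlinarith
  set F : ℕ → ℝ := fun s => chebP s (chebNode n k) * chebP s (chebNode n h) with hF
  have hFs : ∀ s : ℕ, s ≠ 0 →
      F s = (2/π) * (Real.cos ((s:ℝ)*θ k) * Real.cos ((s:ℝ)*θ h)) := by
    intro s hs
    simp only [hF, chebP, if_neg hs, harc k hk1 hk2, harc h hh1 hh2]
    have : Real.sqrt (2/π) * Real.cos ((s:ℝ)*θ k) * (Real.sqrt (2/π) * Real.cos ((s:ℝ)*θ h))
        = (Real.sqrt (2/π) * Real.sqrt (2/π)) * (Real.cos ((s:ℝ)*θ k) * Real.cos ((s:ℝ)*θ h)) := by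
      ring
    rw [this, Real.mul_self_sqrt (by positivity)]
  have hchebP0 : ∀ x:ℝ, chebP 0 x = Real.sqrt (1/π) := fun x => if_pos rfl
  have hF0 : F 0 = 1/π := by
    simp only [hF, hchebP0]
    exact Real.mul_self_sqrt (one_div_nonneg.mpr hπ.le)
  have hshift : ∀ (j : ℕ) (t : ℝ), Real.cos (((n:ℝ)+t)*θ j) = (-1:ℝ)^j * Real.sin (t*θ j) := by
    intro j t
    have e : ((n:ℝ)+t)*θ j = (t*θ j - π/2) + (j:ℝ)*π := by
      rw [hθ]; field_simp; ring
    rw [e, Real.cos_add_nat_mul_pi]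
    congr 1
    rw [show t*θ j - π/2 = -(π/2 - t*θ j) by ring, Real.cos_neg, Real.cos_pi_div_two_sub]
  have hFn : F n = 0 := by
    rw [hFs n hn.ne']
    rw [show (n:ℝ)*θ k = ((n:ℝ)+0)*θ k by ring, hshift k 0]
    simp
  have hFsym : ∀ i : ℕ, 1 ≤ i → i < n → F (n+i) = F (n-i) := by
    intro i hi1 hi2
    have hc1 : ((n+i:ℕ):ℝ) = (n:ℝ) + (i:ℝ) := by push_cast; ring
    have hc2 : ((n-i:ℕ):ℝ) = (n:ℝ) + (-(i:ℝ)) := by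
      have : ((n-i:ℕ):ℝ) = (n:ℝ) - (i:ℝ) := by
        push_cast [hi2.le]; ring
      rw [this]; ring
    rw [hFs (n+i) (by omega), hFs (n-i) (by omega), hc1, hc2,
      hshift k, hshift h, hshift k, hshift h]
    simp only [neg_mul, Real.sin_neg]
    ring
  set G : ℕ → ℝ := fun r => ∑ s ∈ Finset.range (r+1), F s with hG
  have hGtop : G (n-1) = ∑ s ∈ Finset.range n, F s := by
    simp only [hG]
    rw [show n-1+1 = n by omega]
  have hGpair : ∀ d : ℕ, d + 1 < n → G (n+d) + G (n-1-d) = 2 * G (n-1) := by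
    intro d hd
    have e1 : G (n+d) = G (n-1) + ∑ i ∈ Finset.range (d+1), F (n+i) := by
      rw [hGtop]
      simp only [hG]
      rw [show n+d+1 = n + (d+1) by ring, Finset.sum_range_add]
    have e2 : ∑ s ∈ Finset.range n, F s
        = G (n-1-d) + ∑ i ∈ Finset.range d, F (n-d+i) := by
      simp only [hG]
      rw [show n-1-d+1 = n-d by omega, ← Finset.sum_range_add,
        show n-d+d = n by omega]
    have e3 : ∑ i ∈ Finset.range (d+1), F (n+i)
        = ∑ i ∈ Finset.range d, F (n+(i+1)) + F (n+0) := by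
      exact Finset.sum_range_succ' (fun i => F (n+i)) d
    have e4 : ∑ i ∈ Finset.range d, F (n+(i+1)) = ∑ i ∈ Finset.range d, F (n-d+i) := by
      rw [← Finset.sum_range_reflect (fun i => F (n-d+i)) d]
      apply Finset.sum_congr rfl
      intro i hi
      rw [Finset.mem_range] at hi
      rw [show n-d+(d-1-i) = n-(i+1) by omega]
      exact hFsym (i+1) (by omega) (by omega)
    rw [e1, e3, e4, show n+0 = n from rfl, hFn, hGtop, e2]
    ring
  have hsum : ∑ r ∈ Finset.Icc (n-m) (n+m-1), G r = (2*(m:ℝ)) * G (n-1) := by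
    rw [show Finset.Icc (n-m) (n+m-1) = Finset.Ico (n-m) (n+m) by
      rw [← Finset.Ico_add_one_right_eq_Icc]; congr 1; omega]
    rw [Finset.sum_Ico_eq_sum_range, show n+m-(n-m) = 2*m by omega]
    have hrefl := Finset.sum_range_reflect (fun j => G (n-m+j)) (2*m)
    have hterm : ∀ j ∈ Finset.range (2*m),
        G (n-m+j) + G (n-m+(2*m-1-j)) = 2 * G (n-1) := by
      intro j hj
      rw [Finset.mem_range] at hj
      rcases le_or_gt m j with hc | hc
      · rw [show n-m+j = n+(j-m) by omega, show n-m+(2*m-1-j) = n-1-(j-m) by omega]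
        exact hGpair (j-m) (by omega)
      · rw [show n-m+j = n-1-(m-1-j) by omega, show n-m+(2*m-1-j) = n+(m-1-j) by omega,
          add_comm]
        exact hGpair (m-1-j) (by omega)
    have key : (∑ j ∈ Finset.range (2*m), G (n-m+j))
        + (∑ j ∈ Finset.range (2*m), G (n-m+(2*m-1-j)))
        = ((2*m : ℕ) : ℝ) * (2 * G (n-1)) := by
      rw [← Finset.sum_add_distrib, Finset.sum_congr rfl hterm, Finset.sum_const,
        Finset.card_range, nsmul_eq_mul]
    rw [hrefl] at key
    push_cast at key
    linarith
  -- Step B : value of G (n-1)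
  have hB : G (n-1) = if h = k then (n:ℝ)/π else 0 := by
    rw [hGtop]
    set a1 : ℤ := (k:ℤ) + (h:ℤ) - 1 with ha1
    set a2 : ℤ := (k:ℤ) - (h:ℤ) with ha2
    have hprod : ∀ s : ℕ, Real.cos ((s:ℝ)*θ k) * Real.cos ((s:ℝ)*θ h)
        = (Real.cos ((s:ℝ) * ((a2:ℝ) * π / (n:ℝ)))
          + Real.cos ((s:ℝ) * ((a1:ℝ) * π / (n:ℝ)))) / 2 := by
      intro s
      have hA : (s:ℝ) * ((a2:ℝ) * π / (n:ℝ)) = (s:ℝ)*θ k - (s:ℝ)*θ h := by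
        rw [hθ, ha2]; push_cast; field_simp; ring
      have hB' : (s:ℝ) * ((a1:ℝ) * π / (n:ℝ)) = (s:ℝ)*θ k + (s:ℝ)*θ h := by
        rw [hθ, ha1]; push_cast; field_simp; ring
      rw [hA, hB', Real.cos_sub, Real.cos_add]
      ring
    have hsplit : ∑ s ∈ Finset.range n, F s
        = (2/π) * ∑ s ∈ Finset.range n,
            (Real.cos ((s:ℝ)*θ k) * Real.cos ((s:ℝ)*θ h)) - 1/π := by
      have hone : ∑ s ∈ Finset.range n,
          (F s - (2/π) * (Real.cos ((s:ℝ)*θ k) * Real.cos ((s:ℝ)*θ h))) = -(1/π) := by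
        rw [Finset.sum_eq_single 0]
        · rw [hF0]
          norm_num
          field_simp
          norm_num
        · intro b _ hb
          rw [hFs b hb]; ring
        · intro hb
          exact absurd (Finset.mem_range.mpr hn) hb
      rw [Finset.sum_sub_distrib, ← Finset.mul_sum] at hone
      linarith
    have hS : ∑ s ∈ Finset.range n,
        (Real.cos ((s:ℝ)*θ k) * Real.cos ((s:ℝ)*θ h))
        = ((∑ s ∈ Finset.range n, Real.cos ((s:ℝ) * ((a2:ℝ) * π / (n:ℝ))))
          + (∑ s ∈ Finset.range n, Real.cos ((s:ℝ) * ((a1:ℝ) * π / (n:ℝ))))) / 2 := by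
      rw [Finset.sum_congr rfl (fun s _ => hprod s), ← Finset.sum_div, Finset.sum_add_distrib]
    have hd1 : ¬ (2*(n:ℤ)) ∣ a1 := by
      intro ⟨c, hc⟩
      have h1 : (1:ℤ) ≤ a1 := by omega
      have h2 : a1 < 2*(n:ℤ) := by omega
      have : a1 = 0 := Int.eq_zero_of_abs_lt_dvd ⟨c, hc⟩ (by rw [abs_of_nonneg (by omega)]; omega)
      omega
    rcases em (h = k) with heq | hne
    · subst heq
      rw [if_pos rfl]
      have ha2z : a2 = 0 := by omega
      have hS2 : ∑ s ∈ Finset.range n, Real.cos ((s:ℝ) * ((a2:ℝ) * π / (n:ℝ))) = n := by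
        have hc1 : ∀ s ∈ Finset.range n, Real.cos ((s:ℝ) * ((a2:ℝ) * π / (n:ℝ))) = 1 := by
          intro s _
          rw [ha2z]
          simp
        rw [Finset.sum_congr rfl hc1, Finset.sum_const, Finset.card_range, nsmul_eq_mul, mul_one]
      have hS1 : ∑ s ∈ Finset.range n, Real.cos ((s:ℝ) * ((a1:ℝ) * π / (n:ℝ))) = 1 := by
        rw [cosSum n hn a1 hd1, if_neg (by rintro ⟨c, hc⟩; omega)]
      rw [hsplit, hS, hS1, hS2]
      field_simp
      ring
    · rw [if_neg hne]
      have ha2nz : a2 ≠ 0 := by omega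
      have hd2 : ¬ (2*(n:ℤ)) ∣ a2 := by
        intro hdvd
        have : a2 = 0 := Int.eq_zero_of_abs_lt_dvd hdvd (by
          rw [abs_lt]; constructor <;> omega)
        omega
      have hpar : (if Even a2 then (0:ℝ) else 1) + (if Even a1 then (0:ℝ) else 1) = 1 := by
        have : Even a1 ↔ ¬ Even a2 := by
          constructor
          · intro ⟨c, hc⟩ ⟨d, hd⟩; omega
          · intro hv
            rcases Int.even_or_odd a1 with hx | hx
            · exact hx
            · exfalso; apply hv
              obtain ⟨c, hc⟩ := hx
              exact ⟨(k:ℤ)-c-1, by omega⟩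
        rcases em (Even a2) with hv | hv
        · rw [if_pos hv, if_neg (by tauto)]; norm_num
        · rw [if_neg hv, if_pos (this.mpr hv)]; norm_num
      rw [hsplit, hS, cosSum n hn a1 hd1, cosSum n hn a2 hd2, hpar]
      field_simp
      ring
  -- Final assembly
  have hdarb : ∀ r, darboux r (chebNode n k) (chebNode n h) = G r := fun r => rfl
  unfold scal vpK
  rw [Finset.sum_congr rfl (fun r _ => hdarb r), hsum, hB]
  have hm' : (m:ℝ) ≠ 0 := Nat.cast_ne_zero.2 hm.ne'
  rcases em (h = k) with heq | hne
  · rw [if_pos heq, if_pos heq]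
    field_simp
  · rw [if_neg hne, if_neg hne]
    ring
end

section
/- For all integers n, m with 0 < m < n, every k = 1,…,n and every integer s with 0 ≤ s ≤ n−m, the scaling function moments satisfy ∫_{−1}^{1} x^s Φ_{n,k}^m(x) w(x) dx = (π/n)·(x_k^n)^s. -/
open Real MeasureTheory Finset
open intervalIntegral

lemma chebW_meas : Measurable chebW := by
  unfold chebW
  exact measurable_const.div ((continuous_const.sub (continuous_pow 2)).sqrt.measurable)

lemma wInt : IntervalIntegrable chebW volume (-1) 1 := by
  have h1 : IntervalIntegrable (fun x : ℝ => (1 - x) ^ (-(1/2) : ℝ)) volume (-1) 1 := by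
    have := ((intervalIntegrable_rpow' (a := 0) (b := 2) (by norm_num : (-1:ℝ) < -(1/2))).comp_sub_left 1).symm
    norm_num at this
    exact this
  have h2 : IntervalIntegrable (fun x : ℝ => (1 + x) ^ (-(1/2) : ℝ)) volume (-1) 1 := by
    have := (intervalIntegrable_rpow' (a := 0) (b := 2) (by norm_num : (-1:ℝ) < -(1/2))).comp_add_left 1
    norm_num at this
    exact this
  have hmaj : IntervalIntegrable (fun x : ℝ => (1 - x) ^ (-(1/2) : ℝ) + (1 + x) ^ (-(1/2) : ℝ)) volume (-1) 1 := h1.add h2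
  rw [intervalIntegrable_iff_integrableOn_Ioc_of_le (by norm_num)] at hmaj ⊢
  refine hmaj.mono' chebW_meas.aestronglyMeasurable ?_
  filter_upwards [ae_restrict_mem measurableSet_Ioc] with x hx
  have hx1 : (0:ℝ) ≤ 1 - x := by linarith [hx.2]
  have hx2 : (0:ℝ) < 1 + x := by linarith [hx.1]
  have hrhs0 : (0:ℝ) ≤ (1 - x) ^ (-(1/2) : ℝ) + (1 + x) ^ (-(1/2) : ℝ) :=
    add_nonneg (Real.rpow_nonneg hx1 _) (Real.rpow_nonneg hx2.le _)
  have hnn : 0 ≤ chebW x := by unfold chebW; positivity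
  rw [Real.norm_eq_abs, abs_of_nonneg hnn]
  have e1 : (1 - x) ^ (-(1/2) : ℝ) = 1 / Real.sqrt (1 - x) := by
    rw [Real.rpow_neg hx1, Real.sqrt_eq_rpow, one_div]; norm_num
  have e2 : (1 + x) ^ (-(1/2) : ℝ) = 1 / Real.sqrt (1 + x) := by
    rw [Real.rpow_neg hx2.le, Real.sqrt_eq_rpow, one_div]; norm_num
  rcases eq_or_lt_of_le hx.2 with h1' | h1'
  · have : chebW x = 0 := by rw [h1']; norm_num [chebW]
    rw [this]; exact hrhs0
  · have hx1' : (0:ℝ) < 1 - x := by linarith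
    set a := Real.sqrt (1 - x) with ha_def
    set b := Real.sqrt (1 + x) with hb_def
    have ha : 0 < a := Real.sqrt_pos.2 hx1'
    have hb : 0 < b := Real.sqrt_pos.2 hx2
    have key : chebW x = 1 / (a * b) := by
      unfold chebW
      rw [ha_def, hb_def, ← Real.sqrt_mul hx1'.le]
      ring_nf
    rw [key, e1, e2]
    rcases le_or_gt x 0 with hx0 | hx0
    · have ha1 : 1 ≤ a := by
        have := Real.sqrt_le_sqrt (show (1:ℝ) ≤ 1 - x by linarith)
        rwa [Real.sqrt_one] at this
      calc 1 / (a * b) ≤ 1 / b :=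
            one_div_le_one_div_of_le hb (le_mul_of_one_le_left hb.le ha1)
        _ ≤ 1 / a + 1 / b := le_add_of_nonneg_left (by positivity)
    · have hb1 : 1 ≤ b := by
        have := Real.sqrt_le_sqrt (show (1:ℝ) ≤ 1 + x by linarith)
        rwa [Real.sqrt_one] at this
      calc 1 / (a * b) ≤ 1 / a :=
            one_div_le_one_div_of_le ha (le_mul_of_one_le_right ha.le hb1)
        _ ≤ 1 / a + 1 / b := le_add_of_nonneg_right (by positivity)

lemma contMulW {g : ℝ → ℝ} (hg : Continuous g) :
    IntervalIntegrable (fun x => g x * chebW x) volume (-1) 1 := by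
  have h := wInt
  rw [intervalIntegrable_iff_integrableOn_Ioc_of_le (by norm_num)] at h ⊢
  obtain ⟨C, hC⟩ := (isCompact_Icc (a := (-1:ℝ)) (b := 1)).exists_bound_of_continuousOn
    hg.continuousOn
  refine h.bdd_mul (c := C) hg.aestronglyMeasurable ?_
  filter_upwards [ae_restrict_mem measurableSet_Ioc] with x hx
  exact hC x ⟨hx.1.le, hx.2⟩

noncomputable def A (s : ℕ) (t : ℤ) : ℝ :=
  ∫ x in (-1:ℝ)..1, x ^ s * Real.cos ((t : ℝ) * Real.arccos x) * chebW x

lemma A_int (s : ℕ) (t : ℤ) :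
    IntervalIntegrable (fun x => x ^ s * Real.cos ((t : ℝ) * Real.arccos x) * chebW x)
      volume (-1) 1 := by
  have : Continuous fun x : ℝ => x ^ s * Real.cos ((t : ℝ) * Real.arccos x) :=
    (continuous_pow s).mul (Real.continuous_cos.comp (continuous_const.mul Real.continuous_arccos))
  simpa [mul_assoc] using contMulW this

lemma A_zero (t : ℤ) : A 0 t = if t = 0 then π else 0 := by
  unfold A
  rcases eq_or_ne t 0 with rfl | ht
  · rw [if_pos rfl]
    simp only [Int.cast_zero, zero_mul, Real.cos_zero, pow_zero, one_mul]
    rw [integral_eq_sub_of_hasDerivAt_of_le (by norm_num) Real.continuous_arcsin.continuousOn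
      (fun x hx => by
        have := Real.hasDerivAt_arcsin (ne_of_gt hx.1) (ne_of_lt hx.2)
        simpa [chebW] using this) wInt]
    rw [Real.arcsin_one, Real.arcsin_neg_one]
    ring
  · rw [if_neg ht]
    have ht' : (t : ℝ) ≠ 0 := Int.cast_ne_zero.2 ht
    simp only [pow_zero, one_mul]
    rw [integral_eq_sub_of_hasDerivAt_of_le (f := fun x => -Real.sin ((t:ℝ) * Real.arccos x) / t)
      (by norm_num)
      (((Real.continuous_sin.comp (continuous_const.mul Real.continuous_arccos)).neg.div_const _).continuousOn)
      (fun x hx => by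
        have h1 := (Real.hasDerivAt_arccos (ne_of_gt hx.1) (ne_of_lt hx.2)).const_mul (t : ℝ)
        have h2 := (h1.sin).neg.div_const (t : ℝ)
        have h3 : -(Real.cos ((t:ℝ) * Real.arccos x) * ((t:ℝ) * -(1 / Real.sqrt (1 - x ^ 2)))) / (t:ℝ)
            = Real.cos ((t:ℝ) * Real.arccos x) * chebW x := by
          unfold chebW
          rw [div_eq_iff ht']
          ring
        rw [← h3]
        exact h2)
      (by simpa using A_int 0 t)]
    rw [Real.arccos_one, Real.arccos_neg_one]
    simp [Real.sin_int_mul_pi]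

lemma A_symm (s : ℕ) (t : ℤ) : A s (-t) = A s t := by
  unfold A
  simp only [Int.cast_neg, neg_mul, Real.cos_neg]

lemma A_rec (s : ℕ) (t : ℤ) : A (s + 1) t = (A s (t + 1) + A s (t - 1)) / 2 := by
  unfold A
  rw [← integral_add (A_int s (t+1)) (A_int s (t-1)), ← intervalIntegral.integral_div]
  apply intervalIntegral.integral_congr
  intro x hx
  rw [Set.uIcc_of_le (by norm_num : (-1:ℝ) ≤ 1)] at hx
  have hc : Real.cos (Real.arccos x) = x := Real.cos_arccos hx.1 hx.2
  have key : Real.cos (((t+1 : ℤ) : ℝ) * Real.arccos x) + Real.cos (((t-1 : ℤ) : ℝ) * Real.arccos x)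
      = 2 * x * Real.cos ((t:ℝ) * Real.arccos x) := by
    push_cast
    rw [add_mul, sub_mul, one_mul, Real.cos_add, Real.cos_sub, hc]
    ring
  show x ^ (s+1) * Real.cos ((t:ℝ) * Real.arccos x) * chebW x
      = (x ^ s * Real.cos (((t+1:ℤ):ℝ) * Real.arccos x) * chebW x
        + x ^ s * Real.cos (((t-1:ℤ):ℝ) * Real.arccos x) * chebW x) / 2
  rw [pow_succ]
  linear_combination (-(x ^ s * chebW x) / 2) * key

lemma A_vanish : ∀ (s : ℕ) (t : ℤ), s < t.natAbs → A s t = 0 := by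
  intro s
  induction s with
  | zero => intro t ht; rw [A_zero, if_neg (by omega)]
  | succ s ih =>
    intro t ht
    rw [A_rec, ih (t+1) (by omega), ih (t-1) (by omega)]
    norm_num

lemma expansion (s : ℕ) (φ : ℝ) :
    Real.cos φ ^ s = (1/π) * ∑ t ∈ Finset.Icc (-(s:ℤ)) (s:ℤ), A s t * Real.cos ((t:ℝ) * φ) := by
  induction s with
  | zero => simp [A_zero, Real.pi_ne_zero]
  | succ s ih =>
    have key : ∀ t : ℤ, A s t * Real.cos ((t:ℝ) * φ) * Real.cos φ
        = (A s t * Real.cos (((t+1:ℤ):ℝ) * φ) + A s t * Real.cos (((t-1:ℤ):ℝ) * φ)) / 2 := by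
      intro t
      push_cast
      rw [add_mul, sub_mul, one_mul, Real.cos_add, Real.cos_sub]
      ring
    rw [pow_succ, ih, mul_assoc, Finset.sum_mul]
    have step1 : ∑ t ∈ Finset.Icc (-(s:ℤ)) (s:ℤ), A s t * Real.cos ((t:ℝ) * φ) * Real.cos φ
        = ((∑ t ∈ Finset.Icc (-(s:ℤ)) (s:ℤ), A s t * Real.cos (((t+1:ℤ):ℝ) * φ))
          + (∑ t ∈ Finset.Icc (-(s:ℤ)) (s:ℤ), A s t * Real.cos (((t-1:ℤ):ℝ) * φ))) / 2 := by
      rw [Finset.sum_congr rfl (fun t _ => key t), ← Finset.sum_add_distrib, ← Finset.sum_div]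
    rw [step1]
    -- shift the first sum
    have h1 : ∑ t ∈ Finset.Icc (-(s:ℤ)) (s:ℤ), A s t * Real.cos (((t+1:ℤ):ℝ) * φ)
        = ∑ u ∈ Finset.Icc (-(s:ℤ)+1) ((s:ℤ)+1), A s (u-1) * Real.cos ((u:ℝ) * φ) := by
      rw [← Finset.map_add_right_Icc, Finset.sum_map]
      apply Finset.sum_congr rfl
      intro t _
      simp [addRightEmbedding]
    have h2 : ∑ t ∈ Finset.Icc (-(s:ℤ)) (s:ℤ), A s t * Real.cos (((t-1:ℤ):ℝ) * φ)
        = ∑ u ∈ Finset.Icc (-(s:ℤ) + -1) ((s:ℤ) + -1), A s (u+1) * Real.cos ((u:ℝ) * φ) := by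
      rw [← Finset.map_add_right_Icc (c := (-1:ℤ)), Finset.sum_map]
      apply Finset.sum_congr rfl
      intro t _
      simp only [addRightEmbedding, Function.Embedding.coeFn_mk]
      have e : t + -1 + 1 = t := by ring
      rw [e]
      push_cast
      ring_nf
    -- extend both sums to the common index set Icc (-(s+1)) (s+1)
    have ext1 : ∑ u ∈ Finset.Icc (-(s:ℤ)+1) ((s:ℤ)+1), A s (u-1) * Real.cos ((u:ℝ) * φ)
        = ∑ u ∈ Finset.Icc (-(s:ℤ)-1) ((s:ℤ)+1), A s (u-1) * Real.cos ((u:ℝ) * φ) := by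
      apply Finset.sum_subset (Finset.Icc_subset_Icc (by omega) le_rfl)
      intro u hu hnu
      simp only [Finset.mem_Icc] at hu hnu
      rw [A_vanish s (u-1) (by omega), zero_mul]
    have ext2 : ∑ u ∈ Finset.Icc (-(s:ℤ) + -1) ((s:ℤ) + -1), A s (u+1) * Real.cos ((u:ℝ) * φ)
        = ∑ u ∈ Finset.Icc (-(s:ℤ)-1) ((s:ℤ)+1), A s (u+1) * Real.cos ((u:ℝ) * φ) := by
      apply Finset.sum_subset (Finset.Icc_subset_Icc (by omega) (by omega))
      intro u hu hnu
      simp only [Finset.mem_Icc] at hu hnu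
      rw [A_vanish s (u+1) (by omega), zero_mul]
    rw [h1, h2, ext1, ext2, ← Finset.sum_add_distrib]
    have combine : ∀ u ∈ Finset.Icc (-(s:ℤ)-1) ((s:ℤ)+1),
        A s (u-1) * Real.cos ((u:ℝ) * φ) + A s (u+1) * Real.cos ((u:ℝ) * φ)
          = 2 * (A (s+1) u * Real.cos ((u:ℝ) * φ)) := by
      intro u _
      have h := A_rec s u
      linear_combination (-2 : ℝ) * Real.cos ((u:ℝ) * φ) * h
    rw [Finset.sum_congr rfl combine, ← Finset.mul_sum]
    have hset : Finset.Icc (-((s+1:ℕ):ℤ)) ((s+1:ℕ):ℤ) = Finset.Icc (-(s:ℤ)-1) ((s:ℤ)+1) := by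
      congr 1 <;> push_cast <;> ring
    rw [hset]
    ring

lemma symmSum (g : ℤ → ℝ) (hg : ∀ t, g (-t) = g t) : ∀ s : ℕ,
    ∑ t ∈ Finset.Icc (-(s:ℤ)) (s:ℤ), g t = g 0 + 2 * ∑ t ∈ Finset.range s, g (t+1) := by
  intro s
  induction s with
  | zero => simp
  | succ s ih =>
    have hins : Finset.Icc (-((s+1:ℕ):ℤ)) ((s+1:ℕ):ℤ)
        = insert (-((s:ℤ)+1)) (insert ((s:ℤ)+1) (Finset.Icc (-(s:ℤ)) (s:ℤ))) := by
      ext u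
      simp only [Finset.mem_Icc, Finset.mem_insert]
      push_cast
      omega
    rw [hins, Finset.sum_insert (by simp only [Finset.mem_insert, Finset.mem_Icc]; omega),
      Finset.sum_insert (by simp only [Finset.mem_Icc]; omega), ih, Finset.sum_range_succ]
    have := hg ((s:ℤ)+1)
    push_cast
    linarith

noncomputable def dC (t : ℕ) : ℝ := if t = 0 then Real.sqrt (1/π) else Real.sqrt (2/π)

lemma chebP_eq (t : ℕ) (x : ℝ) : chebP t x = dC t * Real.cos ((t:ℝ) * Real.arccos x) := by
  unfold chebP dC
  split_ifs with h
  · subst h; simp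
  · rfl

lemma chebP_cont (t : ℕ) : Continuous (chebP t) := by
  unfold chebP
  split_ifs with h
  · exact continuous_const
  · exact continuous_const.mul (Real.continuous_cos.comp (continuous_const.mul Real.continuous_arccos))

lemma pt_int (s t : ℕ) :
    IntervalIntegrable (fun x => x ^ s * chebP t x * chebW x) volume (-1) 1 := by
  simpa [mul_assoc] using contMulW ((continuous_pow s).mul (chebP_cont t))

lemma moment (s t : ℕ) :
    ∫ x in (-1:ℝ)..1, x ^ s * chebP t x * chebW x = dC t * A s (t : ℤ) := by
  have e : Set.EqOn (fun x => x ^ s * chebP t x * chebW x)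
      (fun x => dC t * (x ^ s * Real.cos (((t:ℤ):ℝ) * Real.arccos x) * chebW x))
      (Set.uIcc (-1:ℝ) 1) := by
    intro x _
    simp only
    rw [chebP_eq]
    push_cast
    ring
  rw [intervalIntegral.integral_congr e, intervalIntegral.integral_const_mul]
  rfl

lemma darb_int (s r : ℕ) (y : ℝ) :
    IntervalIntegrable (fun x => x ^ s * darboux r y x * chebW x) volume (-1) 1 := by
  have hc : Continuous fun x => x ^ s * darboux r y x :=
    (continuous_pow s).mul (continuous_finset_sum _ fun t _ => continuous_const.mul (chebP_cont t))
  simpa [mul_assoc] using contMulW hc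

lemma darboux_moment (s r : ℕ) (y : ℝ) :
    ∫ x in (-1:ℝ)..1, x ^ s * darboux r y x * chebW x
      = ∑ t ∈ Finset.range (r+1), chebP t y * (dC t * A s (t:ℤ)) := by
  have e : Set.EqOn (fun x => x ^ s * darboux r y x * chebW x)
      (fun x => ∑ t ∈ Finset.range (r+1), chebP t y * (x ^ s * chebP t x * chebW x))
      (Set.uIcc (-1:ℝ) 1) := by
    intro x _
    simp only [darboux, Finset.mul_sum, Finset.sum_mul]
    exact Finset.sum_congr rfl fun t _ => by ring
  rw [intervalIntegral.integral_congr e,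
    intervalIntegral.integral_finset_sum (fun t _ => (pt_int s t).const_mul _)]
  exact Finset.sum_congr rfl fun t _ => by
    rw [intervalIntegral.integral_const_mul, moment]

lemma natExp (s : ℕ) (φ : ℝ) :
    ∑ t ∈ Finset.range (s+1),
        (if t = 0 then 1/π else 2/π) * (A s (t:ℤ) * Real.cos ((t:ℝ) * φ))
      = Real.cos φ ^ s := by
  have hg : ∀ t : ℤ, (fun t : ℤ => A s t * Real.cos ((t:ℝ) * φ)) (-t)
      = (fun t : ℤ => A s t * Real.cos ((t:ℝ) * φ)) t := by
    intro t
    simp only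
    rw [A_symm]
    push_cast
    rw [neg_mul, Real.cos_neg]
  have h := symmSum (fun t : ℤ => A s t * Real.cos ((t:ℝ) * φ)) hg s
  rw [expansion s φ, h, Finset.sum_range_succ']
  simp only [Nat.succ_ne_zero, if_false, if_pos rfl, Int.cast_zero, Nat.cast_zero,
    Int.cast_natCast, Int.cast_add, Int.cast_one]
  push_cast
  rw [mul_add, Finset.mul_sum, Finset.mul_sum, add_comm]
  exact congrArg _ (Finset.sum_congr rfl fun t _ => by ring)

lemma sum_moment (s r : ℕ) (hrs : s ≤ r) (φ : ℝ) (hφ0 : 0 ≤ φ) (hφπ : φ ≤ π) :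
    ∫ x in (-1:ℝ)..1, x ^ s * darboux r (Real.cos φ) x * chebW x = Real.cos φ ^ s := by
  rw [darboux_moment]
  have hterm : ∀ t : ℕ, chebP t (Real.cos φ) * (dC t * A s (t:ℤ))
      = (if t = 0 then 1/π else 2/π) * (A s (t:ℤ) * Real.cos ((t:ℝ) * φ)) := by
    intro t
    rw [chebP_eq, Real.arccos_cos hφ0 hφπ]
    unfold dC
    split_ifs with h
    · have hsq : Real.sqrt (1/π) * Real.sqrt (1/π) = 1/π :=
        Real.mul_self_sqrt (by positivity)
      linear_combination (A s (t:ℤ) * Real.cos ((t:ℝ) * φ)) * hsq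
    · have hsq : Real.sqrt (2/π) * Real.sqrt (2/π) = 2/π :=
        Real.mul_self_sqrt (by positivity)
      linear_combination (A s (t:ℤ) * Real.cos ((t:ℝ) * φ)) * hsq
  rw [Finset.sum_congr rfl fun t _ => hterm t]
  rw [← Finset.sum_subset (Finset.range_subset_range.2 (by omega : s+1 ≤ r+1))
    (fun t ht hnt => by
      have hts : s < (t:ℤ).natAbs := by
        simp only [Finset.mem_range] at ht hnt
        simp only [Int.natAbs_natCast]
        omega
      rw [A_vanish s (t:ℤ) hts, zero_mul, mul_zero])]
  exact natExp s φ

theorem scal_moments (n m : ℕ) (hm : 0 < m) (hmn : m < n)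
    (k : ℕ) (hk : k ∈ Finset.Icc 1 n) (s : ℕ) (hs : s ≤ n - m) :
    (∫ x in (-1 : ℝ)..1, x ^ s * scal n m k x * chebW x) =
      (Real.pi / (n : ℝ)) * (chebNode n k) ^ s := by
  obtain ⟨hk1, hkn⟩ := Finset.mem_Icc.mp hk
  have hn : 0 < n := hm.trans hmn
  have hnR : (0:ℝ) < n := by exact_mod_cast hn
  have hmR : (0:ℝ) < m := by exact_mod_cast hm
  set φ := (2 * (k : ℝ) - 1) * π / (2 * (n : ℝ)) with hφdef
  have hk1R : (1:ℝ) ≤ (k:ℝ) := by exact_mod_cast hk1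
  have hknR : (k:ℝ) ≤ (n:ℝ) := by exact_mod_cast hkn
  have hφ0 : 0 ≤ φ := by
    apply div_nonneg (mul_nonneg (by linarith) Real.pi_pos.le) (by linarith)
  have hφπ : φ ≤ π := by
    rw [hφdef, div_le_iff₀ (by linarith)]
    nlinarith [Real.pi_pos]
  have hnode : chebNode n k = Real.cos φ := rfl
  have pull : (∫ x in (-1 : ℝ)..1, x ^ s * scal n m k x * chebW x)
      = (π / (n:ℝ)) * ((1 / (2 * (m:ℝ))) * ∑ r ∈ Finset.Icc (n-m) (n+m-1),
          ∫ x in (-1:ℝ)..1, x ^ s * darboux r (chebNode n k) x * chebW x) := by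
    have e : Set.EqOn (fun x => x ^ s * scal n m k x * chebW x)
        (fun x => (π / (n:ℝ)) * ((1 / (2 * (m:ℝ))) * ∑ r ∈ Finset.Icc (n-m) (n+m-1),
          x ^ s * darboux r (chebNode n k) x * chebW x)) (Set.uIcc (-1:ℝ) 1) := by
      intro x _
      simp only [scal, vpK, Finset.mul_sum, Finset.sum_mul]
      exact Finset.sum_congr rfl fun r _ => by ring
    rw [intervalIntegral.integral_congr e, intervalIntegral.integral_const_mul,
      intervalIntegral.integral_const_mul,
      intervalIntegral.integral_finset_sum (fun r _ => darb_int s r (chebNode n k))]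
  rw [pull, hnode]
  have hval : ∀ r ∈ Finset.Icc (n-m) (n+m-1),
      (∫ x in (-1:ℝ)..1, x ^ s * darboux r (Real.cos φ) x * chebW x) = Real.cos φ ^ s := by
    intro r hr
    have hr' := Finset.mem_Icc.mp hr
    exact sum_moment s r (by omega) φ hφ0 hφπ
  rw [Finset.sum_congr rfl hval, Finset.sum_const, Nat.card_Icc]
  have hcard : n + m - 1 + 1 - (n - m) = 2 * m := by omega
  rw [hcard, nsmul_eq_mul]
  push_cast
  field_simp
end

section
/- For all integers n, m with 0 < m < n, every integer s with 0 ≤ s ≤ n−m and every x ∈ [−1,1], the monomials are reproduced by the scaling functions: x^s = Σ_{k=1}^{n} (x_k^n)^s · Φ_{n,k}^m(x). -/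
open Real MeasureTheory Finset

noncomputable def ang (n k : ℕ) : ℝ := (2 * (k : ℝ) - 1) * Real.pi / (2 * (n : ℝ))

lemma sum_cos_ang (n : ℕ) (hn : 0 < n) (j : ℕ) (hj : j < 2 * n) :
    ∑ k ∈ Finset.Icc 1 n, Real.cos ((j : ℝ) * ang n k) = if j = 0 then (n : ℝ) else 0 := by
  rcases Nat.eq_zero_or_pos j with hj0 | hj0
  · subst hj0; simp
  · rw [if_neg hj0.ne']
    have hn' : (n : ℝ) ≠ 0 := Nat.cast_ne_zero.2 hn.ne'
    have hπ := Real.pi_pos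
    have hsin : Real.sin ((j : ℝ) * Real.pi / (2 * n)) ≠ 0 := by
      apply ne_of_gt
      apply Real.sin_pos_of_pos_of_lt_pi
      · positivity
      · rw [div_lt_iff₀ (by positivity)]
        have : (j : ℝ) < 2 * n := by exact_mod_cast hj
        nlinarith
    have key : ∀ k : ℕ, 2 * Real.sin ((j : ℝ) * Real.pi / (2 * n)) * Real.cos ((j : ℝ) * ang n (1 + k))
        = Real.sin ((j : ℝ) * (k + 1) * Real.pi / n) - Real.sin ((j : ℝ) * k * Real.pi / n) := by
      intro k
      rw [Real.sin_sub_sin]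
      have h1 : ((j : ℝ) * (k + 1) * Real.pi / n - (j : ℝ) * k * Real.pi / n) / 2
          = (j : ℝ) * Real.pi / (2 * n) := by field_simp; ring
      have h2 : ((j : ℝ) * (k + 1) * Real.pi / n + (j : ℝ) * k * Real.pi / n) / 2
          = (j : ℝ) * ang n (1 + k) := by
        simp only [ang]; push_cast; field_simp; ring
      rw [h1, h2]
    have hIcc : Finset.Icc 1 n = Finset.Ico 1 (n + 1) := by
      rw [Finset.Ico_add_one_right_eq_Icc]
    have hsum : ∑ k ∈ Finset.Icc 1 n,
        (2 * Real.sin ((j : ℝ) * Real.pi / (2 * n)) * Real.cos ((j : ℝ) * ang n k)) = 0 := by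
      rw [hIcc, Finset.sum_Ico_eq_sum_range]
      simp only [Nat.add_sub_cancel]
      calc ∑ k ∈ Finset.range n,
            2 * Real.sin ((j : ℝ) * Real.pi / (2 * n)) * Real.cos ((j : ℝ) * ang n (1 + k))
          = ∑ k ∈ Finset.range n,
            (Real.sin ((j : ℝ) * (k + 1) * Real.pi / n) - Real.sin ((j : ℝ) * k * Real.pi / n)) := by
            exact Finset.sum_congr rfl fun k _ => key k
        _ = Real.sin ((j : ℝ) * n * Real.pi / n) - Real.sin ((j : ℝ) * 0 * Real.pi / n) := by
            have := Finset.sum_range_sub (fun k : ℕ => Real.sin ((j : ℝ) * k * Real.pi / n)) n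
            simpa using this
        _ = 0 := by
            have : (j : ℝ) * n * Real.pi / n = (j : ℝ) * Real.pi := by field_simp
            simp [this, Real.sin_nat_mul_pi]
    rw [← Finset.mul_sum] at hsum
    exact (mul_eq_zero.1 hsum).resolve_left (mul_ne_zero two_ne_zero hsin)

lemma sum_cos_cos_aux (n : ℕ) (hn : 0 < n) (j t : ℕ) (ht : t ≤ j) (hjt : j + t < 2 * n) :
    ∑ k ∈ Finset.Icc 1 n, Real.cos ((j : ℝ) * ang n k) * Real.cos ((t : ℝ) * ang n k)
      = if j = t then (if j = 0 then (n : ℝ) else (n : ℝ) / 2) else 0 := by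
  have step : ∀ k : ℕ, Real.cos ((j : ℝ) * ang n k) * Real.cos ((t : ℝ) * ang n k)
      = (Real.cos (((j + t : ℕ) : ℝ) * ang n k) + Real.cos (((j - t : ℕ) : ℝ) * ang n k)) / 2 := by
    intro k
    have h1 : (((j + t : ℕ) : ℝ)) * ang n k = (j : ℝ) * ang n k + (t : ℝ) * ang n k := by
      push_cast; ring
    have h2 : (((j - t : ℕ) : ℝ)) * ang n k = (j : ℝ) * ang n k - (t : ℝ) * ang n k := by
      rw [Nat.cast_sub ht]; ring
    rw [h1, h2, Real.cos_add, Real.cos_sub]; ring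
  rw [Finset.sum_congr rfl fun k _ => step k]
  rw [← Finset.sum_div, Finset.sum_add_distrib,
    sum_cos_ang n hn (j + t) hjt, sum_cos_ang n hn (j - t) (by omega)]
  rcases eq_or_ne j t with h | h
  · subst h
    rcases eq_or_ne j 0 with h0 | h0
    · simp [h0]
    · simp [h0, Nat.add_eq_zero, h0]
  · rw [if_neg h]
    have : j + t ≠ 0 := by omega
    have h2 : j - t ≠ 0 := by omega
    simp [this, h2]
    exact fun h3 h4 => absurd (h3.trans h4.symm) h

lemma sum_cos_cos (n : ℕ) (hn : 0 < n) (j t : ℕ) (hjt : j + t < 2 * n) :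
    ∑ k ∈ Finset.Icc 1 n, Real.cos ((j : ℝ) * ang n k) * Real.cos ((t : ℝ) * ang n k)
      = if j = t then (if j = 0 then (n : ℝ) else (n : ℝ) / 2) else 0 := by
  rcases le_total t j with h | h
  · exact sum_cos_cos_aux n hn j t h hjt
  · have := sum_cos_cos_aux n hn t j h (by omega)
    calc ∑ k ∈ Finset.Icc 1 n, Real.cos ((j : ℝ) * ang n k) * Real.cos ((t : ℝ) * ang n k)
        = ∑ k ∈ Finset.Icc 1 n, Real.cos ((t : ℝ) * ang n k) * Real.cos ((j : ℝ) * ang n k) := by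
          exact Finset.sum_congr rfl fun k _ => mul_comm _ _
      _ = if t = j then (if t = 0 then (n : ℝ) else (n : ℝ) / 2) else 0 := this
      _ = if j = t then (if j = 0 then (n : ℝ) else (n : ℝ) / 2) else 0 := by
          rcases eq_or_ne j t with h' | h'
          · subst h'; rfl
          · rw [if_neg h', if_neg (Ne.symm h')]

noncomputable def cc (t : ℕ) : ℝ := if t = 0 then 1 / Real.pi else 2 / Real.pi

lemma repro_cos (n m : ℕ) (hm : 0 < m) (hmn : m < n) (j : ℕ) (hj : j ≤ n - m) (x : ℝ) :
    Real.cos ((j : ℝ) * Real.arccos x)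
      = ∑ k ∈ Finset.Icc 1 n, Real.cos ((j : ℝ) * ang n k) * scal n m k x := by
  have hn : 0 < n := hm.trans hmn
  have hπ := Real.pi_pos
  have hn' : (n : ℝ) ≠ 0 := Nat.cast_ne_zero.2 hn.ne'
  have hm' : (m : ℝ) ≠ 0 := Nat.cast_ne_zero.2 hm.ne'
  set θ := Real.arccos x with hθ
  -- chebP at a node
  have hnode : ∀ k ∈ Finset.Icc 1 n, ∀ t : ℕ,
      chebP t (chebNode n k) * chebP t x
        = cc t * (Real.cos ((t : ℝ) * ang n k) * Real.cos ((t : ℝ) * θ)) := by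
    intro k hk t
    simp only [Finset.mem_Icc] at hk
    have hang : Real.arccos (chebNode n k) = ang n k := by
      have h1 : (1 : ℝ) ≤ (k : ℝ) := by exact_mod_cast hk.1
      have h2 : (k : ℝ) ≤ (n : ℝ) := by exact_mod_cast hk.2
      have hlo : 0 ≤ ang n k := by
        simp only [ang]
        apply div_nonneg _ (by positivity)
        nlinarith
      have hhi : ang n k ≤ Real.pi := by
        simp only [ang]
        rw [div_le_iff₀ (by positivity)]
        nlinarith
      rw [chebNode, show (2 * (k : ℝ) - 1) * Real.pi / (2 * (n : ℝ)) = ang n k from rfl]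
      exact Real.arccos_cos hlo hhi
    rcases eq_or_ne t 0 with h0 | h0
    · subst h0
      have hss : Real.sqrt (1 / Real.pi) * Real.sqrt (1 / Real.pi) = 1 / Real.pi :=
        Real.mul_self_sqrt (by positivity)
      simp only [chebP, if_pos rfl, cc, Nat.cast_zero, zero_mul, Real.cos_zero, mul_one, one_mul, eq_self_iff_true, if_true]
      rw [hss]
    · simp only [chebP, if_neg h0, cc, if_neg h0, hang]
      rw [show Real.sqrt (2 / Real.pi) * Real.cos ((t : ℝ) * ang n k) *
          (Real.sqrt (2 / Real.pi) * Real.cos ((t : ℝ) * θ))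
          = (Real.sqrt (2 / Real.pi) * Real.sqrt (2 / Real.pi)) *
            (Real.cos ((t : ℝ) * ang n k) * Real.cos ((t : ℝ) * θ)) from by ring]
      rw [Real.mul_self_sqrt (by positivity)]
  -- expand each k-summand
  have hk1 : ∀ k ∈ Finset.Icc 1 n,
      Real.cos ((j : ℝ) * ang n k) * scal n m k x
        = ∑ r ∈ Finset.Icc (n - m) (n + m - 1), ∑ t ∈ Finset.range (r + 1),
            (Real.pi / (n : ℝ) * (1 / (2 * (m : ℝ))) * (cc t * Real.cos ((t : ℝ) * θ)))
              * (Real.cos ((j : ℝ) * ang n k) * Real.cos ((t : ℝ) * ang n k)) := by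
    intro k hk
    simp only [scal, vpK, darboux, Finset.mul_sum]
    refine Finset.sum_congr rfl fun r _ => Finset.sum_congr rfl fun t _ => ?_
    rw [hnode k hk t]
    ring
  rw [Finset.sum_congr rfl hk1, Finset.sum_comm]
  have hk2 : ∀ r ∈ Finset.Icc (n - m) (n + m - 1),
      (∑ k ∈ Finset.Icc 1 n, ∑ t ∈ Finset.range (r + 1),
        (Real.pi / (n : ℝ) * (1 / (2 * (m : ℝ))) * (cc t * Real.cos ((t : ℝ) * θ)))
          * (Real.cos ((j : ℝ) * ang n k) * Real.cos ((t : ℝ) * ang n k)))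
      = Real.pi / (n : ℝ) * (1 / (2 * (m : ℝ))) * ((n : ℝ) / Real.pi)
          * Real.cos ((j : ℝ) * θ) := by
    intro r hr
    simp only [Finset.mem_Icc] at hr
    rw [Finset.sum_comm]
    have hin : ∀ t ∈ Finset.range (r + 1),
        (∑ k ∈ Finset.Icc 1 n,
          (Real.pi / (n : ℝ) * (1 / (2 * (m : ℝ))) * (cc t * Real.cos ((t : ℝ) * θ)))
            * (Real.cos ((j : ℝ) * ang n k) * Real.cos ((t : ℝ) * ang n k)))
        = (Real.pi / (n : ℝ) * (1 / (2 * (m : ℝ))) * (cc t * Real.cos ((t : ℝ) * θ)))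
            * (if j = t then (if j = 0 then (n : ℝ) else (n : ℝ) / 2) else 0) := by
      intro t htr
      rw [← Finset.mul_sum, sum_cos_cos n hn j t (by simp only [Finset.mem_range] at htr; omega)]
    rw [Finset.sum_congr rfl hin]
    rw [Finset.sum_eq_single_of_mem j (by simp only [Finset.mem_range]; omega)]
    · rw [if_pos rfl]
      rcases eq_or_ne j 0 with h0 | h0
      · simp only [if_pos h0, h0, cc, if_pos rfl]
        push_cast [h0]
        ring
      · simp only [if_neg h0, cc, if_neg h0]
        ring
    · intro t _ htj
      rw [if_neg (Ne.symm htj), mul_zero]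
  rw [Finset.sum_congr rfl hk2, Finset.sum_const, Nat.card_Icc]
  have hcard : n + m - 1 + 1 - (n - m) = 2 * m := by omega
  rw [hcard, nsmul_eq_mul]
  push_cast
  field_simp

lemma cos_pow_expand (s : ℕ) (θ : ℝ) :
    Real.cos θ ^ s = (1 / 2 ^ s) *
      ∑ j ∈ Finset.range (s + 1), (s.choose j : ℝ) * Real.cos (((s : ℝ) - 2 * (j : ℝ)) * θ) := by
  induction s with
  | zero => simp
  | succ s ih =>
    have key : ∑ j ∈ Finset.range (s + 2), ((s + 1).choose j : ℝ) *
          Real.cos ((((s : ℝ) + 1) - 2 * (j : ℝ)) * θ)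
        = (∑ j ∈ Finset.range (s + 1), (s.choose j : ℝ) *
            Real.cos ((((s : ℝ) + 1) - 2 * (j : ℝ)) * θ))
          + ∑ j ∈ Finset.range (s + 1), (s.choose j : ℝ) *
            Real.cos ((((s : ℝ) - 1) - 2 * (j : ℝ)) * θ) := by
      rw [Finset.sum_range_succ' (fun j => ((s + 1).choose j : ℝ) *
          Real.cos ((((s : ℝ) + 1) - 2 * (j : ℝ)) * θ)) (s + 1)]
      have hsplit : ∀ j ∈ Finset.range (s + 1),
          ((s + 1).choose (j + 1) : ℝ) * Real.cos ((((s : ℝ) + 1) - 2 * ((j + 1 : ℕ) : ℝ)) * θ)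
          = (s.choose j : ℝ) * Real.cos ((((s : ℝ) - 1) - 2 * (j : ℝ)) * θ)
            + (s.choose (j + 1) : ℝ) * Real.cos ((((s : ℝ) - 1) - 2 * (j : ℝ)) * θ) := by
        intro j _
        rw [Nat.choose_succ_succ]
        push_cast
        rw [show ((s : ℝ) + 1) - 2 * ((j : ℝ) + 1) = ((s : ℝ) - 1) - 2 * (j : ℝ) from by ring]
        ring
      rw [Finset.sum_congr rfl hsplit, Finset.sum_add_distrib]
      have hB : ∑ j ∈ Finset.range (s + 1), (s.choose j : ℝ) *
            Real.cos ((((s : ℝ) + 1) - 2 * (j : ℝ)) * θ)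
          = (∑ j ∈ Finset.range (s + 1), (s.choose (j + 1) : ℝ) *
              Real.cos ((((s : ℝ) - 1) - 2 * (j : ℝ)) * θ))
            + ((s + 1).choose 0 : ℝ) * Real.cos ((((s : ℝ) + 1) - 2 * ((0 : ℕ) : ℝ)) * θ) := by
        rw [Finset.sum_range_succ' (fun j => (s.choose j : ℝ) *
            Real.cos ((((s : ℝ) + 1) - 2 * (j : ℝ)) * θ)) s]
        rw [Finset.sum_range_succ (fun j => (s.choose (j + 1) : ℝ) *
            Real.cos ((((s : ℝ) - 1) - 2 * (j : ℝ)) * θ)) s]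
        rw [Nat.choose_succ_self, Nat.cast_zero, zero_mul, add_zero]
        simp only [Nat.choose_zero_right, Nat.cast_zero, Nat.cast_one, Nat.cast_ofNat]
        congr 1
        refine Finset.sum_congr rfl fun j _ => ?_
        push_cast
        rw [show ((s : ℝ) + 1) - 2 * ((j : ℝ) + 1) = ((s : ℝ) - 1) - 2 * (j : ℝ) from by ring]
      rw [hB]
      push_cast
      ring
    have step : Real.cos θ ^ (s + 1) = Real.cos θ ^ s * Real.cos θ := by ring
    rw [step, ih]
    have hterm : ∀ j ∈ Finset.range (s + 1),
        ((s.choose j : ℝ) * Real.cos (((s : ℝ) - 2 * (j : ℝ)) * θ)) * Real.cos θ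
        = (1 / 2) * ((s.choose j : ℝ) * Real.cos ((((s : ℝ) + 1) - 2 * (j : ℝ)) * θ)
            + (s.choose j : ℝ) * Real.cos ((((s : ℝ) - 1) - 2 * (j : ℝ)) * θ)) := by
      intro j _
      have hca := Real.cos_add (((s : ℝ) - 2 * (j : ℝ)) * θ) θ
      have h2 := Real.cos_sub (((s : ℝ) - 2 * (j : ℝ)) * θ) θ
      have e1 : (((s : ℝ) + 1) - 2 * (j : ℝ)) * θ = ((s : ℝ) - 2 * (j : ℝ)) * θ + θ := by ring
      have e2 : (((s : ℝ) - 1) - 2 * (j : ℝ)) * θ = ((s : ℝ) - 2 * (j : ℝ)) * θ - θ := by ring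
      rw [e1, e2, hca, h2]
      ring
    rw [mul_assoc, Finset.sum_mul, Finset.sum_congr rfl hterm, ← Finset.mul_sum,
      Finset.sum_add_distrib]
    push_cast at key ⊢
    rw [key]
    ring

lemma repro_cos_int (n m : ℕ) (hm : 0 < m) (hmn : m < n) (c : ℤ) (hc : c.natAbs ≤ n - m)
    (x : ℝ) :
    Real.cos ((c : ℝ) * Real.arccos x)
      = ∑ k ∈ Finset.Icc 1 n, Real.cos ((c : ℝ) * ang n k) * scal n m k x := by
  have habs : ∀ t : ℝ, Real.cos ((c : ℝ) * t) = Real.cos ((c.natAbs : ℝ) * t) := by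
    intro t
    rw [Nat.cast_natAbs, Int.cast_abs]
    rcases le_or_gt 0 (c : ℝ) with h | h
    · rw [abs_of_nonneg h]
    · rw [abs_of_neg h, neg_mul, Real.cos_neg]
  simp only [habs]
  exact repro_cos n m hm hmn c.natAbs hc x

theorem scal_reproduces_monomials (n m : ℕ) (hm : 0 < m) (hmn : m < n)
    (s : ℕ) (hs : s ≤ n - m) (x : ℝ) (hx : x ∈ Set.Icc (-1 : ℝ) 1) :
    x ^ s = ∑ k ∈ Finset.Icc 1 n, (chebNode n k) ^ s * scal n m k x := by
  have hn : 0 < n := hm.trans hmn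
  have main_j : ∀ j ∈ Finset.range (s + 1),
      Real.cos (((s : ℝ) - 2 * (j : ℝ)) * Real.arccos x)
        = ∑ k ∈ Finset.Icc 1 n, Real.cos (((s : ℝ) - 2 * (j : ℝ)) * ang n k) * scal n m k x := by
    intro j hj
    have hj' : j ≤ s := by simp only [Finset.mem_range] at hj; omega
    have h1 : (((s : ℤ) - 2 * (j : ℤ) : ℤ) : ℝ) = (s : ℝ) - 2 * (j : ℝ) := by push_cast; ring
    rw [← h1]
    refine repro_cos_int n m hm hmn ((s : ℤ) - 2 * (j : ℤ)) ?_ x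
    omega
  calc x ^ s = Real.cos (Real.arccos x) ^ s := by rw [Real.cos_arccos hx.1 hx.2]
    _ = (1 / 2 ^ s) * ∑ j ∈ Finset.range (s + 1), (s.choose j : ℝ) *
          Real.cos (((s : ℝ) - 2 * (j : ℝ)) * Real.arccos x) := cos_pow_expand s _
    _ = (1 / 2 ^ s) * ∑ j ∈ Finset.range (s + 1), (s.choose j : ℝ) *
          ∑ k ∈ Finset.Icc 1 n, Real.cos (((s : ℝ) - 2 * (j : ℝ)) * ang n k) * scal n m k x := by
        congr 1
        exact Finset.sum_congr rfl fun j hj => by rw [main_j j hj]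
    _ = ∑ k ∈ Finset.Icc 1 n, (chebNode n k) ^ s * scal n m k x := by
        simp only [Finset.mul_sum]
        rw [Finset.sum_comm]
        refine Finset.sum_congr rfl fun k _ => ?_
        rw [show chebNode n k = Real.cos (ang n k) from rfl, cos_pow_expand s (ang n k),
          Finset.mul_sum, Finset.sum_mul]
        exact Finset.sum_congr rfl fun j _ => by ring
end

section
/- For all integers n, m with 0 < m < n, every k = 1,…,n and every x ∈ [−1,1], the scaling function can be expanded in the orthogonal basis as Φ_{n,k}^m(x) = (π/n)·Σ_{r=0}^{n−1} p_r(x_k^n)·Φ_{n,r}^⊥(x). -/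
open Real MeasureTheory Finset

lemma arccos_node (n k : ℕ) (hn : 0 < n) (hk1 : 1 ≤ k) (hk2 : k ≤ n) :
    Real.arccos (chebNode n k) = (2 * (k : ℝ) - 1) * Real.pi / (2 * (n : ℝ)) := by
  have hn' : (0:ℝ) < n := by exact_mod_cast hn
  have hk1' : (1:ℝ) ≤ k := by exact_mod_cast hk1
  have hk2' : (k:ℝ) ≤ n := by exact_mod_cast hk2
  apply Real.arccos_cos
  · apply div_nonneg _ (by positivity)
    nlinarith [Real.pi_pos]
  · rw [div_le_iff₀ (by positivity)]
    nlinarith [Real.pi_pos]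

lemma chebP_node_self (n k : ℕ) (hn : 0 < n) (hk1 : 1 ≤ k) (hk2 : k ≤ n) :
    chebP n (chebNode n k) = 0 := by
  have hn' : (0:ℝ) < n := by exact_mod_cast hn
  rw [chebP, if_neg hn.ne', arccos_node n k hn hk1 hk2]
  have h1 : (n:ℝ) * ((2 * (k : ℝ) - 1) * Real.pi / (2 * (n : ℝ)))
      = (2 * ((k:ℝ) - 1) + 1) * Real.pi / 2 := by
    field_simp; ring
  have h2 : Real.cos ((n:ℝ) * ((2 * (k : ℝ) - 1) * Real.pi / (2 * (n : ℝ)))) = 0 := by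
    rw [h1]; exact Real.cos_eq_zero_iff.mpr ⟨(k:ℤ) - 1, by push_cast; ring⟩
  rw [h2, mul_zero]

lemma chebP_node_reflect (n k r : ℕ) (hn : 0 < n) (hk1 : 1 ≤ k) (hk2 : k ≤ n)
    (hr1 : 1 ≤ r) (hr2 : r < 2 * n) :
    chebP (2 * n - r) (chebNode n k) = - chebP r (chebNode n k) := by
  have hn' : (0:ℝ) < n := by exact_mod_cast hn
  have h2 : r ≤ 2 * n := hr2.le
  have hne : 2 * n - r ≠ 0 := by omega
  rw [chebP, chebP, if_neg hne, if_neg (by omega), arccos_node n k hn hk1 hk2]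
  set θ : ℝ := (2 * (k : ℝ) - 1) * Real.pi / (2 * (n : ℝ)) with hθ
  have hcast : ((2 * n - r : ℕ) : ℝ) = 2 * (n:ℝ) - r := by
    push_cast [Nat.cast_sub h2]; ring
  have key : ((2 * n - r : ℕ) : ℝ) * θ = (k:ℝ) * (2 * Real.pi) - ((r:ℝ) * θ + Real.pi) := by
    rw [hcast, hθ]; field_simp; ring
  rw [key, Real.cos_nat_mul_two_pi_sub, Real.cos_add]
  simp [Real.cos_pi, Real.sin_pi]

theorem scal_expansion_in_perp_basis (n m : ℕ) (hm : 0 < m) (hmn : m < n)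
    (k : ℕ) (hk : k ∈ Finset.Icc 1 n) (x : ℝ) (hx : x ∈ Set.Icc (-1 : ℝ) 1) :
    scal n m k x =
      (Real.pi / (n : ℝ)) * ∑ r ∈ Finset.range n, chebP r (chebNode n k) * scalPerp n m r x := by
  obtain ⟨hk1, hk2⟩ := Finset.mem_Icc.mp hk
  have hn : 0 < n := hm.trans hmn
  have hm' : (0:ℝ) < m := by exact_mod_cast hm
  set g : ℕ → ℝ := fun s => muC n m s * (chebP s (chebNode n k) * chebP s x) with hg
  have hvpK : vpK n m (chebNode n k) x = ∑ s ∈ Finset.range (n + m), g s := by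
    rw [vpK]
    simp only [darboux]
    rw [Finset.sum_comm' (s' := fun s => Finset.Icc (max (n - m) s) (n + m - 1))
      (t' := Finset.range (n + m))
      (fun r s => by simp only [Finset.mem_Icc, Finset.mem_range]; omega)]
    rw [Finset.mul_sum]
    refine Finset.sum_congr rfl fun s hs => ?_
    have hs' : s < n + m := Finset.mem_range.mp hs
    rw [Finset.sum_const, Nat.card_Icc, nsmul_eq_mul, hg]
    by_cases hle : s ≤ n - m
    · have h1 : max (n - m) s = n - m := by omega
      have h2 : (n + m - 1 + 1 - (n - m)) = 2 * m := by omega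
      rw [h1, h2]
      simp only [g, muC, if_pos hle]
      push_cast
      field_simp
    · have h1 : max (n - m) s = s := by omega
      rw [h1]
      have h2 : ((n + m - 1 + 1 - s : ℕ) : ℝ) = (m:ℝ) + n - s := by
        have h3 : (n + m - 1 + 1 - s) = n + m - s := by omega
        rw [h3, Nat.cast_sub hs'.le]; push_cast; ring
      rw [h2]
      simp only [g, muC, if_neg hle, if_pos hs']
      ring
  have hgn : g n = 0 := by
    rw [hg]; simp [chebP_node_self n k hn hk1 hk2]
  have hsplit : ∑ s ∈ Finset.range (n + m), g s
      = (∑ s ∈ Finset.range n, g s) + ∑ s ∈ Finset.Ico (n + 1) (n + m), g s := by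
    rw [Finset.range_eq_Ico,
      ← Finset.sum_Ico_consecutive g (by omega : 0 ≤ n) (by omega : n ≤ n + m),
      Finset.sum_eq_sum_Ico_succ_bot (by omega : n < n + m), hgn, zero_add,
      ← Finset.range_eq_Ico]
  have hreindex : ∑ s ∈ Finset.Ico (n + 1) (n + m), g s
      = ∑ r ∈ Finset.Ico (n - m + 1) n, g (2 * n - r) := by
    refine Finset.sum_nbij' (fun s => 2 * n - s) (fun r => 2 * n - r) ?_ ?_ ?_ ?_ ?_ <;>
      intro a ha <;> simp only [Finset.mem_Ico] at * <;> try omega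
    have : 2 * n - (2 * n - a) = a := by omega
    rw [this]
  have hRHS : ∑ r ∈ Finset.range n, chebP r (chebNode n k) * scalPerp n m r x
      = (∑ r ∈ Finset.range n, g r) + ∑ r ∈ Finset.Ico (n - m + 1) n, g (2 * n - r) := by
    have hpt : ∀ r ∈ Finset.range n, chebP r (chebNode n k) * scalPerp n m r x
        = g r + (if r ≤ n - m then 0 else g (2 * n - r)) := by
      intro r hr
      have hr' := Finset.mem_range.mp hr
      by_cases hle : r ≤ n - m
      · rw [scalPerp, if_pos hle, if_pos hle, hg]
        simp only [muC, if_pos hle, one_mul, add_zero]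
      · rw [scalPerp, if_neg hle, if_neg hle, hg]
        have hrefl := chebP_node_reflect n k r hn hk1 hk2 (by omega) (by omega)
        simp only [hrefl]
        ring
    rw [Finset.sum_congr rfl hpt, Finset.sum_add_distrib]
    congr 1
    rw [Finset.sum_ite, Finset.sum_const_zero, zero_add]
    congr 1
    ext r
    simp only [Finset.mem_filter, Finset.mem_range, Finset.mem_Ico]
    omega
  rw [scal, hvpK, hsplit, hreindex, hRHS]
end

section
/- For all integers n, m with 0 < m < n, the wavelet functions ψ_{n,k}^m satisfy the interpolation properties: ψ_{n,k}^m(y_h^n) = δ_{h,k} for all h, k = 1,…,2n, and ψ_{n,k}^m(x_h^n) = −Φ_{n,h}^m(y_k^n) for all h = 1,…,n and k = 1,…,2n. -/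
open Real MeasureTheory Finset

lemma tele_cos (α : ℝ) (r : ℕ) :
    ∑ s ∈ Finset.range (r + 1), 2 * Real.sin (α / 2) * Real.cos ((s : ℝ) * α)
      = Real.sin (((r : ℝ) + 1 / 2) * α) + Real.sin (α / 2) := by
  induction r with
  | zero =>
    simp
    rw [show (2:ℝ)⁻¹ * α = α / 2 by ring]
    ring
  | succ r ih =>
    rw [Finset.sum_range_succ, ih]
    have h := Real.sin_sub_sin (((r : ℝ) + 1 + 1 / 2) * α) (((r : ℝ) + 1 / 2) * α)
    rw [show (((r : ℝ) + 1 + 1 / 2) * α - ((r : ℝ) + 1 / 2) * α) / 2 = α / 2 by ring,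
      show (((r : ℝ) + 1 + 1 / 2) * α + ((r : ℝ) + 1 / 2) * α) / 2 = ((r : ℝ) + 1) * α
        by ring] at h
    push_cast
    linarith

lemma sum_cos_eq (α : ℝ) (h : Real.sin (α / 2) ≠ 0) (r : ℕ) :
    ∑ s ∈ Finset.range (r + 1), Real.cos ((s : ℝ) * α)
      = 1 / 2 + Real.sin (((r : ℝ) + 1 / 2) * α) / (2 * Real.sin (α / 2)) := by
  have h2 : (2 : ℝ) * Real.sin (α / 2) ≠ 0 := by simpa using h
  have key : ∑ s ∈ Finset.range (r + 1), Real.cos ((s : ℝ) * α)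
      = (1 / (2 * Real.sin (α / 2)))
        * ∑ s ∈ Finset.range (r + 1), 2 * Real.sin (α / 2) * Real.cos ((s : ℝ) * α) := by
    rw [Finset.mul_sum]
    refine Finset.sum_congr rfl fun s _ => ?_
    field_simp
  rw [key, tele_cos]
  field_simp
  ring

lemma sin_half_ne (N : ℕ) (hN : 0 < N) (a : ℤ) (ha : a ≠ 0) (hlo : -(2 * (N : ℤ)) < a)
    (hhi : a < 2 * N) : Real.sin ((a : ℝ) * Real.pi / (N : ℝ) / 2) ≠ 0 := by
  intro h
  rw [Real.sin_eq_zero_iff] at h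
  obtain ⟨t, ht⟩ := h
  have hNne : ((N : ℝ)) ≠ 0 := Nat.cast_ne_zero.mpr hN.ne'
  have hpi := Real.pi_ne_zero
  have h3 : ((t * (N * 2) : ℤ) : ℝ) * Real.pi = (a : ℝ) * Real.pi := by
    field_simp at ht
    push_cast
    rw [← ht]; ring
  have h4 : (t * (N * 2) : ℤ) = a := by exact_mod_cast mul_right_cancel₀ hpi h3
  rcases eq_or_ne t 0 with rfl | ht0
  · omega
  · rcases lt_or_gt_of_ne ht0 with h1 | h1
    · nlinarith [mul_nonneg (by linarith : (0 : ℤ) ≤ -t - 1 + 1) (by positivity : (0 : ℤ) ≤ (N : ℤ) * 2)]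
    · nlinarith [mul_nonneg (by linarith : (0 : ℤ) ≤ t - 1) (by positivity : (0 : ℤ) ≤ (N : ℤ) * 2)]

lemma sin_sum_zero (N m : ℕ) (hm : 0 < m) (hmN : m ≤ N) (a : ℤ) :
    ∑ t ∈ Finset.range (2 * m),
      Real.sin ((((N - m + t : ℕ) : ℝ) + 1 / 2) * ((a : ℝ) * Real.pi / (N : ℝ))) = 0 := by
  have hNne : ((N : ℝ)) ≠ 0 := Nat.cast_ne_zero.mpr (by omega)
  set β : ℝ := (a : ℝ) * Real.pi / (N : ℝ) with hβdef
  set g : ℕ → ℝ := fun r => Real.sin (((r : ℝ) + 1 / 2) * β) with hg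
  have hβ : (N : ℝ) * β = (a : ℝ) * Real.pi := by rw [hβdef]; field_simp
  have key : ∀ r1 r2 : ℕ, r1 + r2 + 1 = 2 * N → g r1 + g r2 = 0 := by
    intro r1 r2 hsum
    have hc : (r1 : ℝ) + (r2 : ℝ) + 1 = 2 * (N : ℝ) := by exact_mod_cast congrArg (Nat.cast : ℕ → ℝ) hsum
    have harg : ((r2 : ℝ) + 1 / 2) * β = -(((r1 : ℝ) + 1 / 2) * β) + (a : ℝ) * (2 * Real.pi) := by
      linear_combination β * hc + 2 * hβ
    show Real.sin (((r1 : ℝ) + 1 / 2) * β) + Real.sin (((r2 : ℝ) + 1 / 2) * β) = 0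
    rw [harg, Real.sin_add_int_mul_two_pi, Real.sin_neg]
    ring
  have h2S : (∑ t ∈ Finset.range (2 * m), g (N - m + t))
      + (∑ t ∈ Finset.range (2 * m), g (N - m + t)) = 0 := by
    nth_rewrite 2 [← Finset.sum_range_reflect (fun t => g (N - m + t)) (2 * m)]
    rw [← Finset.sum_add_distrib]
    refine Finset.sum_eq_zero fun t ht => ?_
    have ht' : t < 2 * m := Finset.mem_range.mp ht
    exact key (N - m + t) (N - m + (2 * m - 1 - t)) (by omega)
  have : (∑ t ∈ Finset.range (2 * m), g (N - m + t)) = 0 := by linarith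
  exact this

lemma arccos_chebNode (N k : ℕ) (hN : 0 < N) (h1 : 1 ≤ k) (h2 : k ≤ N) :
    Real.arccos (chebNode N k) = (2 * (k : ℝ) - 1) * Real.pi / (2 * (N : ℝ)) := by
  have hk1 : (1 : ℝ) ≤ (k : ℝ) := by exact_mod_cast h1
  have hkN : (k : ℝ) ≤ (N : ℝ) := by exact_mod_cast h2
  have hN0 : (0 : ℝ) < (N : ℝ) := by exact_mod_cast hN
  unfold chebNode
  apply Real.arccos_cos
  · apply div_nonneg (mul_nonneg (by linarith) Real.pi_pos.le) (by positivity)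
  · rw [div_le_iff₀ (by positivity)]
    nlinarith [Real.pi_pos]

lemma chebP_mul_node (N i j s : ℕ) (hN : 0 < N) (hi1 : 1 ≤ i) (hiN : i ≤ N)
    (hj1 : 1 ≤ j) (hjN : j ≤ N) :
    chebP s (chebNode N i) * chebP s (chebNode N j)
      = (1 / Real.pi) * (Real.cos ((s : ℝ) * (((i : ℝ) - (j : ℝ)) * Real.pi / (N : ℝ)))
          + Real.cos ((s : ℝ) * (((i : ℝ) + (j : ℝ) - 1) * Real.pi / (N : ℝ))))
        - (if s = 0 then 1 / Real.pi else 0) := by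
  have hNne : ((N : ℝ)) ≠ 0 := Nat.cast_ne_zero.mpr hN.ne'
  have hi := arccos_chebNode N i hN hi1 hiN
  have hj := arccos_chebNode N j hN hj1 hjN
  unfold chebP
  by_cases hs : s = 0
  · subst hs
    have hss : Real.sqrt (1 / Real.pi) * Real.sqrt (1 / Real.pi) = 1 / Real.pi :=
      Real.mul_self_sqrt (by positivity)
    simp only [if_pos rfl, Nat.cast_zero, zero_mul, Real.cos_zero, if_true, eq_self_iff_true]
    rw [hss]
    ring
  · simp only [if_neg hs]
    rw [hi, hj]
    set X : ℝ := (s : ℝ) * ((2 * (i : ℝ) - 1) * Real.pi / (2 * (N : ℝ))) with hX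
    set Y : ℝ := (s : ℝ) * ((2 * (j : ℝ) - 1) * Real.pi / (2 * (N : ℝ))) with hY
    have h2 : Real.sqrt (2 / Real.pi) * Real.sqrt (2 / Real.pi) = 2 / Real.pi :=
      Real.mul_self_sqrt (by positivity)
    have hcc : Real.cos X * Real.cos Y = (Real.cos (X - Y) + Real.cos (X + Y)) / 2 := by
      have h := Real.cos_add_cos (X - Y) (X + Y)
      rw [show (X - Y + (X + Y)) / 2 = X by ring,
        show (X - Y - (X + Y)) / 2 = -Y by ring, Real.cos_neg] at h
      linarith
    have e1 : X - Y = (s : ℝ) * (((i : ℝ) - (j : ℝ)) * Real.pi / (N : ℝ)) := by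
      rw [hX, hY]; field_simp; ring
    have e2 : X + Y = (s : ℝ) * (((i : ℝ) + (j : ℝ) - 1) * Real.pi / (N : ℝ)) := by
      rw [hX, hY]; field_simp; ring
    rw [show Real.sqrt (2 / Real.pi) * Real.cos X * (Real.sqrt (2 / Real.pi) * Real.cos Y)
        = Real.sqrt (2 / Real.pi) * Real.sqrt (2 / Real.pi) * (Real.cos X * Real.cos Y)
        by ring, h2, hcc, e1, e2]
    ring

lemma darboux_node (N i j r : ℕ) (hN : 0 < N) (hi1 : 1 ≤ i) (hiN : i ≤ N)
    (hj1 : 1 ≤ j) (hjN : j ≤ N) :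
    darboux r (chebNode N i) (chebNode N j)
      = (1 / Real.pi) *
          ((∑ s ∈ Finset.range (r + 1),
              Real.cos ((s : ℝ) * (((i : ℝ) - (j : ℝ)) * Real.pi / (N : ℝ))))
            + (∑ s ∈ Finset.range (r + 1),
              Real.cos ((s : ℝ) * (((i : ℝ) + (j : ℝ) - 1) * Real.pi / (N : ℝ))))
            - 1) := by
  unfold darboux
  rw [Finset.sum_congr rfl fun s _ => chebP_mul_node N i j s hN hi1 hiN hj1 hjN]
  rw [Finset.sum_sub_distrib, ← Finset.mul_sum, Finset.sum_add_distrib]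
  rw [Finset.sum_ite_eq' (Finset.range (r + 1)) 0 (fun _ => 1 / Real.pi)]
  simp only [Finset.mem_range, Nat.lt_add_left_iff_pos, Nat.zero_lt_succ, if_true]
  ring

lemma gauss_real (n : ℕ) : ∑ t ∈ Finset.range n, (t : ℝ) = n * (n - 1) / 2 := by
  induction n with
  | zero => simp
  | succ n ih => rw [Finset.sum_range_succ, ih]; push_cast; ring

lemma vpK_node (N m i j : ℕ) (hm : 0 < m) (hmN : m < N)
    (hi1 : 1 ≤ i) (hiN : i ≤ N) (hj1 : 1 ≤ j) (hjN : j ≤ N) :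
    vpK N m (chebNode N i) (chebNode N j) = if i = j then (N : ℝ) / Real.pi else 0 := by
  have hN : 0 < N := lt_trans hm hmN
  have hNne : ((N : ℝ)) ≠ 0 := Nat.cast_ne_zero.mpr hN.ne'
  have hmne : ((m : ℝ)) ≠ 0 := Nat.cast_ne_zero.mpr hm.ne'
  have hpine := Real.pi_ne_zero
  have hIcc : Finset.Icc (N - m) (N + m - 1) = Finset.Ico (N - m) (N + m) := by
    rw [← Finset.Ico_add_one_right_eq_Icc]; congr 1; omega
  have h2m : N + m - (N - m) = 2 * m := by omega
  rcases eq_or_ne i j with rfl | hij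
  · -- diagonal case
    simp only [if_pos rfl]
    have hc2 : ((2 * (i : ℤ) - 1 : ℤ) : ℝ) * Real.pi / (N : ℝ)
        = ((i : ℝ) + (i : ℝ) - 1) * Real.pi / (N : ℝ) := by push_cast; ring
    have hs2 : Real.sin (((2 * (i : ℤ) - 1 : ℤ) : ℝ) * Real.pi / (N : ℝ) / 2) ≠ 0 :=
      sin_half_ne N hN _ (by omega) (by omega) (by omega)
    rw [vpK, hIcc, Finset.sum_Ico_eq_sum_range, h2m]
    have hper : ∀ t ∈ Finset.range (2 * m),
        darboux (N - m + t) (chebNode N i) (chebNode N i)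
          = 1 / Real.pi * (((N - m + t : ℕ) : ℝ) + 1 / 2)
            + 1 / (Real.pi * (2 * Real.sin (((2 * (i : ℤ) - 1 : ℤ) : ℝ) * Real.pi / (N : ℝ) / 2)))
              * Real.sin ((((N - m + t : ℕ) : ℝ) + 1 / 2)
                  * (((2 * (i : ℤ) - 1 : ℤ) : ℝ) * Real.pi / (N : ℝ))) := by
      intro t ht
      rw [darboux_node N i i _ hN hi1 hiN hi1 hiN, ← hc2]
      have hz : ∀ s : ℕ, Real.cos ((s : ℝ) * (((i : ℝ) - (i : ℝ)) * Real.pi / (N : ℝ))) = 1 := by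
        intro s; norm_num
      rw [Finset.sum_congr rfl fun s _ => hz s, Finset.sum_const, Finset.card_range,
        sum_cos_eq _ hs2, nsmul_eq_mul, mul_one]
      have hc3 : ((N - m + t + 1 : ℕ) : ℝ) = ((N - m + t : ℕ) : ℝ) + 1 := by push_cast; ring
      rw [hc3]
      generalize Real.sin ((((N - m + t : ℕ) : ℝ) + 1 / 2)
          * (((2 * (i : ℤ) - 1 : ℤ) : ℝ) * Real.pi / (N : ℝ))) = q
      generalize hu : Real.sin (((2 * (i : ℤ) - 1 : ℤ) : ℝ) * Real.pi / (N : ℝ) / 2) = u at hs2 ⊢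
      generalize ((N - m + t : ℕ) : ℝ) = c
      field_simp
      ring
    rw [Finset.sum_congr rfl hper, Finset.sum_add_distrib, ← Finset.mul_sum, ← Finset.mul_sum,
      sin_sum_zero N m hm hmN.le (2 * (i : ℤ) - 1), mul_zero, add_zero]
    have hcast : ∀ t ∈ Finset.range (2 * m),
        (((N - m + t : ℕ) : ℝ) + 1 / 2) = ((N : ℝ) - (m : ℝ) + 1 / 2) + (t : ℝ) := by
      intro t ht
      push_cast [Nat.cast_sub hmN.le]
      ring
    rw [Finset.sum_congr rfl hcast, Finset.sum_add_distrib, Finset.sum_const, Finset.card_range,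
      gauss_real, nsmul_eq_mul]
    push_cast
    field_simp
    ring
  · -- off-diagonal case
    simp only [if_neg hij]
    have hc1 : (((i : ℤ) - (j : ℤ) : ℤ) : ℝ) * Real.pi / (N : ℝ)
        = ((i : ℝ) - (j : ℝ)) * Real.pi / (N : ℝ) := by push_cast; ring
    have hc2 : (((i : ℤ) + (j : ℤ) - 1 : ℤ) : ℝ) * Real.pi / (N : ℝ)
        = ((i : ℝ) + (j : ℝ) - 1) * Real.pi / (N : ℝ) := by push_cast; ring
    have hs1 : Real.sin ((((i : ℤ) - (j : ℤ) : ℤ) : ℝ) * Real.pi / (N : ℝ) / 2) ≠ 0 :=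
      sin_half_ne N hN _ (by omega) (by omega) (by omega)
    have hs2 : Real.sin ((((i : ℤ) + (j : ℤ) - 1 : ℤ) : ℝ) * Real.pi / (N : ℝ) / 2) ≠ 0 :=
      sin_half_ne N hN _ (by omega) (by omega) (by omega)
    rw [vpK, hIcc, Finset.sum_Ico_eq_sum_range, h2m]
    have hper : ∀ t ∈ Finset.range (2 * m),
        darboux (N - m + t) (chebNode N i) (chebNode N j)
          = 1 / (Real.pi * (2 * Real.sin ((((i : ℤ) - (j : ℤ) : ℤ) : ℝ) * Real.pi / (N : ℝ) / 2)))
              * Real.sin ((((N - m + t : ℕ) : ℝ) + 1 / 2)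
                  * ((((i : ℤ) - (j : ℤ) : ℤ) : ℝ) * Real.pi / (N : ℝ)))
            + 1 / (Real.pi * (2 * Real.sin ((((i : ℤ) + (j : ℤ) - 1 : ℤ) : ℝ) * Real.pi / (N : ℝ) / 2)))
              * Real.sin ((((N - m + t : ℕ) : ℝ) + 1 / 2)
                  * ((((i : ℤ) + (j : ℤ) - 1 : ℤ) : ℝ) * Real.pi / (N : ℝ))) := by
      intro t ht
      rw [darboux_node N i j _ hN hi1 hiN hj1 hjN, ← hc1, ← hc2,
        sum_cos_eq _ hs1, sum_cos_eq _ hs2]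
      generalize Real.sin ((((N - m + t : ℕ) : ℝ) + 1 / 2)
          * ((((i : ℤ) - (j : ℤ) : ℤ) : ℝ) * Real.pi / (N : ℝ))) = q1
      generalize Real.sin ((((N - m + t : ℕ) : ℝ) + 1 / 2)
          * ((((i : ℤ) + (j : ℤ) - 1 : ℤ) : ℝ) * Real.pi / (N : ℝ))) = q2
      generalize hu1 : Real.sin ((((i : ℤ) - (j : ℤ) : ℤ) : ℝ) * Real.pi / (N : ℝ) / 2) = u1 at hs1 ⊢
      generalize hu2 : Real.sin ((((i : ℤ) + (j : ℤ) - 1 : ℤ) : ℝ) * Real.pi / (N : ℝ) / 2) = u2 at hs2 ⊢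
      field_simp
      ring
    rw [Finset.sum_congr rfl hper, Finset.sum_add_distrib, ← Finset.mul_sum, ← Finset.mul_sum,
      sin_sum_zero N m hm hmN.le ((i : ℤ) - (j : ℤ)), sin_sum_zero N m hm hmN.le ((i : ℤ) + (j : ℤ) - 1)]
    simp

lemma vpK_node' (N m i j : ℕ) (hm : 0 < m) (hmN : m < N)
    (hi1 : 1 ≤ i) (hiN : i ≤ N) (hj1 : 1 ≤ j) (hjN : j ≤ N) :
    Real.pi / (N : ℝ) * vpK N m (chebNode N i) (chebNode N j) = if i = j then 1 else 0 := by
  have hN : 0 < N := lt_trans hm hmN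
  have hNne : ((N : ℝ)) ≠ 0 := Nat.cast_ne_zero.mpr hN.ne'
  rw [vpK_node N m i j hm hmN hi1 hiN hj1 hjN]
  rcases eq_or_ne i j with rfl | h
  · rw [if_pos rfl, if_pos rfl]
    field_simp
  · rw [if_neg h, if_neg h, mul_zero]

lemma key3 (n m i j : ℕ) (hm : 0 < m) (hmn : m < n) (hi1 : 1 ≤ i) (hiN : i ≤ 3 * n)
    (hj1 : 1 ≤ j) (hjN : j ≤ 3 * n) :
    Real.pi / (3 * (n : ℝ)) * vpK (3 * n) m (chebNode (3 * n) i) (chebNode (3 * n) j)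
      = if i = j then 1 else 0 := by
  have h := vpK_node' (3 * n) m i j hm (by omega) hi1 hiN hj1 hjN
  have hc : ((3 * n : ℕ) : ℝ) = 3 * (n : ℝ) := by push_cast; ring
  rw [hc] at h
  exact h

lemma chebNode_triple (n h : ℕ) (hn : 0 < n) (h1 : 1 ≤ h) :
    chebNode n h = chebNode (3 * n) (3 * h - 1) := by
  unfold chebNode
  congr 1
  have hNne : ((n : ℝ)) ≠ 0 := Nat.cast_ne_zero.mpr hn.ne'
  have hc : ((3 * h - 1 : ℕ) : ℝ) = 3 * (h : ℝ) - 1 := by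
    push_cast [Nat.cast_sub (by omega : 1 ≤ 3 * h)]; ring
  rw [hc]
  push_cast
  field_simp
  ring

theorem wav_interpolation (n m : ℕ) (hm : 0 < m) (hmn : m < n) :
    (∀ h ∈ Finset.Icc 1 (2 * n), ∀ k ∈ Finset.Icc 1 (2 * n),
        wav n m k (yNode n h) = if h = k then 1 else 0) ∧
      (∀ h ∈ Finset.Icc 1 n, ∀ k ∈ Finset.Icc 1 (2 * n),
        wav n m k (chebNode n h) = -scal n m h (yNode n k)) := by
  constructor
  · intro h hh k hk
    simp only [Finset.mem_Icc] at hh hk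
    unfold wav
    rw [show yNode n h = chebNode (3 * n) (3 * h / 2) from rfl,
      show yNode n k = chebNode (3 * n) (3 * k / 2) from rfl,
      key3 n m (3 * k / 2) (3 * h / 2) hm hmn (by omega) (by omega) (by omega) (by omega)]
    have hz : ∀ h' ∈ Finset.Icc 1 n,
        scal n m h' (chebNode (3 * n) (3 * k / 2)) *
          (Real.pi / (3 * (n : ℝ)) *
            vpK (3 * n) m (chebNode n h') (chebNode (3 * n) (3 * h / 2))) = 0 := by
      intro h' hh'
      simp only [Finset.mem_Icc] at hh'
      rw [chebNode_triple n h' (by omega) hh'.1,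
        key3 n m (3 * h' - 1) (3 * h / 2) hm hmn (by omega) (by omega) (by omega) (by omega),
        if_neg (by omega)]
      ring
    rw [Finset.sum_eq_zero hz, sub_zero]
    by_cases hhk : h = k
    · subst hhk; rw [if_pos rfl, if_pos rfl]
    · rw [if_neg (by omega : ¬ 3 * k / 2 = 3 * h / 2), if_neg hhk]
  · intro h hh k hk
    simp only [Finset.mem_Icc] at hh hk
    unfold wav
    rw [chebNode_triple n h (by omega) hh.1,
      show yNode n k = chebNode (3 * n) (3 * k / 2) from rfl,
      key3 n m (3 * k / 2) (3 * h - 1) hm hmn (by omega) (by omega) (by omega) (by omega),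
      if_neg (by omega)]
    have hz : ∀ h' ∈ Finset.Icc 1 n,
        scal n m h' (chebNode (3 * n) (3 * k / 2)) *
          (Real.pi / (3 * (n : ℝ)) *
            vpK (3 * n) m (chebNode n h') (chebNode (3 * n) (3 * h - 1)))
          = if h' = h then scal n m h' (chebNode (3 * n) (3 * k / 2)) else 0 := by
      intro h' hh'
      simp only [Finset.mem_Icc] at hh'
      rw [chebNode_triple n h' (by omega) hh'.1,
        key3 n m (3 * h' - 1) (3 * h - 1) hm hmn (by omega) (by omega) (by omega) (by omega)]
      by_cases e : h' = h
      · subst e; rw [if_pos rfl, if_pos rfl, mul_one]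
      · rw [if_neg (by omega), if_neg e, mul_zero]
    rw [Finset.sum_congr rfl hz,
      Finset.sum_ite_eq' (Finset.Icc 1 n) h
        (fun h' => scal n m h' (chebNode (3 * n) (3 * k / 2))),
      if_pos (Finset.mem_Icc.mpr ⟨hh.1, hh.2⟩)]
    ring
end
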